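/- For a (p_r,q_r)-interval I_r and a (p'_s,q'_s)-interval J_s of ℝ² (intervals with finitely many minimal and maximal points), and ε ≥ 0: J_s ⊆ I_r^ε and I_r ⊆ J_s^ε if and only if ε ≥ max(max_k a_k, max_l b_l, max_i a'_i, max_j b'_j), where a_k = min_i max((1-δ(x^r_i, x^s_k))|x^s_k - x^r_i|, (1-δ(y^r_i, y^s_k))|y^s_k - y^r_i|) ranges over the minimal points, b_l = min_j max(δ(X^r_j, X^s_l)|X^s_l - X^r_j|, δ(Y^r_j, Y^s_l)|Y^s_l - Y^r_j|) over the maximal points, and a'_i, b'_j are obtained by swapping the roles of the two intervals. -/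

import Mathlib

/-- The closed `ε`-ball in `ℝ²` around `p` w.r.t. the supremum distance, as an
order interval. -/
def supBall2 (p : ℝ × ℝ) (ε : ℝ) : Set (ℝ × ℝ) :=
  {q | p.1 - ε ≤ q.1 ∧ p.2 - ε ≤ q.2 ∧ q.1 ≤ p.1 + ε ∧ q.2 ≤ p.2 + ε}

/-- The `ε`-thickening of a subset of `ℝ²`. -/
def thick2 (I : Set (ℝ × ℝ)) (ε : ℝ) : Set (ℝ × ℝ) :=
  ⋃ p ∈ I, supBall2 p ε

/-- An interval of the poset `ℝ²`: nonempty, order-convex, connected via chains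
of pairwise-comparable consecutive points. -/
def IsInterval2 (I : Set (ℝ × ℝ)) : Prop :=
  I.Nonempty ∧
  (∀ p ∈ I, ∀ q ∈ I, ∀ r, p ≤ r → r ≤ q → r ∈ I) ∧
  (∀ p ∈ I, ∀ q ∈ I, ∃ (n : ℕ) (c : Fin (n + 1) → ℝ × ℝ),
    c 0 = p ∧ c (Fin.last n) = q ∧ (∀ i, c i ∈ I) ∧
    ∀ i : Fin n, c i.castSucc ≤ c i.succ ∨ c i.succ ≤ c i.castSucc)

/-- `δ(x,y) = 1` if `x ≤ y` and `0` otherwise. -/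
noncomputable def ind (x y : ℝ) : ℝ := if x ≤ y then 1 else 0

/-- The quantity `max((1-δ(x,x'))|x'-x|, (1-δ(y,y'))|y'-y|)` comparing a minimal
point `m` of one interval with a minimal point `m'` of the other. -/
noncomputable def dMinPt (m m' : ℝ × ℝ) : ℝ :=
  max ((1 - ind m.1 m'.1) * |m'.1 - m.1|) ((1 - ind m.2 m'.2) * |m'.2 - m.2|)

/-- The quantity `max(δ(X,X')|X'-X|, δ(Y,Y')|Y'-Y|)` comparing a maximal point
`M` of one interval with a maximal point `M'` of the other. -/
noncomputable def dMaxPt (M M' : ℝ × ℝ) : ℝ :=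
  max (ind M.1 M'.1 * |M'.1 - M.1|) (ind M.2 M'.2 * |M'.2 - M.2|)

/-!
By the characterization of `J ⊆ I^ε` through minimal and maximal points, everything reduces to:
a point `w` of `J` lies in `I^ε` iff `I` meets the box `[w - ε, w + ε]`, and the min/max
conditions provide a point of `I` below the top corner of that box and one above its bottom
corner. An interval of `ℝ²` with such points meets the box: follow a chain of comparable points
of `I` from the first to the second. Until it is above the bottom corner `bl`, the chain stays
below or left of `bl`, and it can only switch sides or climb above `bl` through the box or past
one of its two side corners; order-convexity then puts a point of `I` in the box. The
quantities `a_k, b_l` are coordinatewise overshoots, so `dMinPt i k ≤ ε ↔ i - (ε, ε) ≤ k`.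
-/

open Set

lemma Set.OrdConnected.inter_Icc_nonempty_of_le {α : Type*} [Lattice α] {I : Set α}
    {a b l u : α} (hI : I.OrdConnected) (ha : a ∈ I) (hb : b ∈ I) (hab : a ≤ b)
    (hau : a ≤ u) (hlb : l ≤ b) (hlu : l ≤ u) : (I ∩ Icc l u).Nonempty :=
  ⟨a ⊔ l, hI.out ha hb ⟨le_sup_left, sup_le hab hlb⟩, le_sup_right, sup_le hau hlu⟩

lemma IsInterval2.ordConnected {I : Set (ℝ × ℝ)} (hI : IsInterval2 I) : I.OrdConnected :=
  ⟨fun _ hp _ hq _ hr => hI.2.1 _ hp _ hq _ hr.1 hr.2⟩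

/-- Invariant of a walk through `I` towards the upper set of `bl`: the current point is below
(resp. left of) `bl`, and `I` has a point below the lower-right (resp. upper-left) corner of
the box `[bl, bu]`, so that climbing past that corner forces `I` to meet the box. -/
def CornerInv (I : Set (ℝ × ℝ)) (bl bu x : ℝ × ℝ) : Prop :=
  (x.2 < bl.2 ∧ ∃ u ∈ I, u ≤ (bu.1, bl.2)) ∨ (x.1 < bl.1 ∧ ∃ u ∈ I, u ≤ (bl.1, bu.2))

section CornerInv

variable {I : Set (ℝ × ℝ)} {bl bu : ℝ × ℝ}

lemma CornerInv.not_le {x : ℝ × ℝ} (h : CornerInv I bl bu x) : ¬bl ≤ x := by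
  rintro ⟨h1, h2⟩
  rcases h with ⟨hx, -⟩ | ⟨hx, -⟩ <;> linarith

lemma cornerInv_of_not_le {p : ℝ × ℝ} (hp : p ∈ I) (hpu : p ≤ bu) (hlp : ¬bl ≤ p) :
    CornerInv I bl bu p := by
  rw [Prod.le_def, not_and_or, not_le, not_le] at hlp
  rcases hlp with h | h
  · exact Or.inr ⟨h, p, hp, h.le, hpu.2⟩
  · exact Or.inl ⟨h, p, hp, hpu.1, h.le⟩

lemma cornerInv_swap {x : ℝ × ℝ} :
    CornerInv (Prod.swap ⁻¹' I) bl.swap bu.swap x.swap ↔ CornerInv I bl bu x := by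
  have hex (a b : ℝ) : (∃ u ∈ Prod.swap ⁻¹' I, u ≤ (a, b)) ↔ ∃ u ∈ I, u ≤ (b, a) :=
    ⟨fun ⟨u, hu, h⟩ => ⟨u.swap, hu, Prod.swap_le_swap.2 h⟩,
      fun ⟨u, hu, h⟩ => ⟨u.swap, by simpa using hu, Prod.swap_le_swap.2 h⟩⟩
  simp only [CornerInv, Prod.fst_swap, Prod.snd_swap, hex]
  exact or_comm

lemma inter_Icc_nonempty_or_cornerInv_of_snd_lt (hI : I.OrdConnected) (hb : bl ≤ bu)
    {c d u : ℝ × ℝ} (hc : c ∈ I) (hd : d ∈ I) (hcd : c ≤ d ∨ d ≤ c) (hc2 : c.2 < bl.2)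
    (hu : u ∈ I) (hu' : u ≤ (bu.1, bl.2)) :
    (I ∩ Icc bl bu).Nonempty ∨ CornerInv I bl bu d := by
  by_cases hd2 : d.2 < bl.2
  · exact Or.inr (Or.inl ⟨hd2, u, hu, hu'⟩)
  rw [not_lt] at hd2
  have hcd : c ≤ d := hcd.resolve_right fun h => (h.2.trans_lt hc2).not_ge hd2
  by_cases hse : (bu.1, bl.2) ≤ d
  · have hse_mem : (bu.1, bl.2) ∈ Icc bl bu := ⟨⟨hb.1, le_rfl⟩, ⟨le_rfl, hb.2⟩⟩
    exact Or.inl (hI.inter_Icc_nonempty_of_le hu hd (hu'.trans hse) (hu'.trans hse_mem.2)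
      (hse_mem.1.trans hse) hb)
  have hd1 : d.1 < bu.1 := by
    by_contra! h
    exact hse ⟨h, hd2⟩
  by_cases hld : bl.1 ≤ d.1
  · exact Or.inl (hI.inter_Icc_nonempty_of_le hc hd hcd ⟨hcd.1.trans hd1.le, hc2.le.trans hb.2⟩
      ⟨hld, hd2⟩ hb)
  rw [not_le] at hld
  exact Or.inr (Or.inr ⟨hld, (d.1, c.2), hI.out hc hd ⟨⟨hcd.1, le_rfl⟩, ⟨le_rfl, hcd.2⟩⟩,
    hld.le, hc2.le.trans hb.2⟩)

lemma inter_Icc_nonempty_or_cornerInv (hI : I.OrdConnected) (hb : bl ≤ bu) {c d : ℝ × ℝ}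
    (hc : c ∈ I) (hd : d ∈ I) (hcd : c ≤ d ∨ d ≤ c) (h : CornerInv I bl bu c) :
    (I ∩ Icc bl bu).Nonempty ∨ CornerInv I bl bu d := by
  rcases h with ⟨hc2, u, hu, hu'⟩ | ⟨hc1, u, hu, hu'⟩
  · exact inter_Icc_nonempty_or_cornerInv_of_snd_lt hI hb hc hd hcd hc2 hu hu'
  · have hI' : (Prod.swap ⁻¹' I).OrdConnected := hI.preimage_mono fun _ _ => Prod.swap_le_swap.2
    have := inter_Icc_nonempty_or_cornerInv_of_snd_lt hI' (Prod.swap_le_swap.2 hb)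
      (c := c.swap) (d := d.swap) (u := u.swap) (by simpa using hc) (by simpa using hd)
      (by simpa using hcd) hc1 (by simpa using hu) (Prod.swap_le_swap.2 hu')
    rw [← cornerInv_swap]
    refine this.imp_left fun ⟨z, hz, hzl, hzu⟩ => ⟨z.swap, hz, ?_, ?_⟩
    · exact Prod.swap_le_swap.1 hzl
    · exact Prod.swap_le_swap.1 hzu

end CornerInv

theorem IsInterval2.inter_Icc_nonempty {I : Set (ℝ × ℝ)} (hI : IsInterval2 I)
    {bl bu p q : ℝ × ℝ} (hb : bl ≤ bu) (hp : p ∈ I) (hq : q ∈ I) (hpu : p ≤ bu)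
    (hlq : bl ≤ q) : (I ∩ Icc bl bu).Nonempty := by
  by_cases hlp : bl ≤ p
  · exact ⟨p, hp, hlp, hpu⟩
  obtain ⟨n, c, rfl, rfl, hcI, hcmp⟩ := hI.2.2 p hp q hq
  have hwalk : ∀ i, (I ∩ Icc bl bu).Nonempty ∨ CornerInv I bl bu (c i) := by
    intro i
    induction i using Fin.induction with
    | zero => exact Or.inr (cornerInv_of_not_le hp hpu hlp)
    | succ i ih =>
      exact ih.elim Or.inl
        (inter_Icc_nonempty_or_cornerInv hI.ordConnected hb (hcI _) (hcI _) (hcmp i))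
  exact (hwalk (Fin.last n)).resolve_right fun h => h.not_le hlq

lemma mem_thick2_iff {I : Set (ℝ × ℝ)} {ε : ℝ} {w : ℝ × ℝ} :
    w ∈ thick2 I ε ↔ (I ∩ Icc (w - (ε, ε)) (w + (ε, ε))).Nonempty := by
  simp only [thick2, supBall2, mem_iUnion, mem_ofPred_eq, exists_prop, Set.Nonempty, mem_inter_iff,
    mem_Icc, Prod.le_def, Prod.fst_sub, Prod.snd_sub, Prod.fst_add, Prod.snd_add]
  refine exists_congr fun p => and_congr_right fun _ => ?_
  constructor
  · rintro ⟨h1, h2, h3, h4⟩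
    exact ⟨⟨by linarith, by linarith⟩, by linarith, by linarith⟩
  · rintro ⟨⟨h1, h2⟩, h3, h4⟩
    exact ⟨by linarith, by linarith, by linarith, by linarith⟩

lemma subset_thick2_iff {I J minI maxI minJ maxJ : Set (ℝ × ℝ)} {ε : ℝ} (hε : 0 ≤ ε)
    (hI : IsInterval2 I) (hIreg : I = {p | ∃ m ∈ minI, ∃ M ∈ maxI, m ≤ p ∧ p ≤ M})
    (hJreg : J = {p | ∃ m ∈ minJ, ∃ M ∈ maxJ, m ≤ p ∧ p ≤ M})
    (hminI : minI ⊆ I) (hmaxI : maxI ⊆ I) (hminJ : minJ ⊆ J) (hmaxJ : maxJ ⊆ J) :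
    J ⊆ thick2 I ε ↔
      (∀ k ∈ minJ, ∃ i ∈ minI, i - (ε, ε) ≤ k) ∧ (∀ l ∈ maxJ, ∃ j ∈ maxI, l ≤ j + (ε, ε)) := by
  constructor
  · intro hJI
    refine ⟨fun k hk => ?_, fun l hl => ?_⟩
    · obtain ⟨p, hpI, -, hpk⟩ := mem_thick2_iff.1 (hJI (hminJ hk))
      rw [hIreg] at hpI
      obtain ⟨m, hm, -, -, hmp, -⟩ := hpI
      exact ⟨m, hm, sub_le_iff_le_add.2 (hmp.trans hpk)⟩
    · obtain ⟨p, hpI, hlp, -⟩ := mem_thick2_iff.1 (hJI (hmaxJ hl))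
      rw [hIreg] at hpI
      obtain ⟨-, -, M, hM, -, hpM⟩ := hpI
      exact ⟨M, hM, sub_le_iff_le_add.1 (hlp.trans hpM)⟩
  · rintro ⟨hmin, hmax⟩ w hw
    rw [hJreg] at hw
    obtain ⟨k, hk, l, hl, hkw, hwl⟩ := hw
    obtain ⟨i, hi, hik⟩ := hmin k hk
    obtain ⟨j, hj, hlj⟩ := hmax l hl
    have hεε : (0 : ℝ × ℝ) ≤ (ε, ε) := ⟨hε, hε⟩
    exact mem_thick2_iff.2 <| hI.inter_Icc_nonempty
      ((sub_le_self _ hεε).trans (le_add_of_nonneg_right hεε)) (hminI hi) (hmaxI hj)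
      (sub_le_iff_le_add.1 (hik.trans hkw)) (sub_le_iff_le_add.2 (hwl.trans hlj))

lemma one_sub_ind_mul_abs_le_iff {ε : ℝ} (hε : 0 ≤ ε) (x x' : ℝ) :
    (1 - ind x x') * |x' - x| ≤ ε ↔ x - ε ≤ x' := by
  unfold ind
  split_ifs with h
  · simp only [sub_self, zero_mul]
    exact iff_of_true hε (by linarith)
  · rw [sub_zero, one_mul, abs_of_neg (by linarith)]
    constructor <;> intro <;> linarith

lemma ind_mul_abs_le_iff {ε : ℝ} (hε : 0 ≤ ε) (x x' : ℝ) :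
    ind x x' * |x' - x| ≤ ε ↔ x' ≤ x + ε := by
  unfold ind
  split_ifs with h
  · rw [one_mul, abs_of_nonneg (by linarith)]
    constructor <;> intro <;> linarith
  · simp only [zero_mul]
    exact iff_of_true hε (by linarith)

lemma dMinPt_le_iff {ε : ℝ} (hε : 0 ≤ ε) (m m' : ℝ × ℝ) :
    dMinPt m m' ≤ ε ↔ m - (ε, ε) ≤ m' := by
  rw [dMinPt, max_le_iff, one_sub_ind_mul_abs_le_iff hε, one_sub_ind_mul_abs_le_iff hε]
  rfl

lemma dMaxPt_le_iff {ε : ℝ} (hε : 0 ≤ ε) (M M' : ℝ × ℝ) :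
    dMaxPt M M' ≤ ε ↔ M' ≤ M + (ε, ε) := by
  rw [dMaxPt, max_le_iff, ind_mul_abs_le_iff hε, ind_mul_abs_le_iff hε]
  rfl

/-- For a `(p_r,q_r)`-interval `I` and a `(p'_s,q'_s)`-interval `J` of `ℝ²`
(the closed regions determined by their finitely many minimal and maximal
points) and `ε ≥ 0`: `J ⊆ I^ε` and `I ⊆ J^ε` hold iff
`ε ≥ max(max_k a_k, max_l b_l, max_i a'_i, max_j b'_j)`. -/
theorem containment_iff_eps_ge (minI maxI minJ maxJ : Finset (ℝ × ℝ))
    (hmI : minI.Nonempty) (hMI : maxI.Nonempty)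
    (hmJ : minJ.Nonempty) (hMJ : maxJ.Nonempty)
    (I J : Set (ℝ × ℝ))
    (hIint : IsInterval2 I) (hJint : IsInterval2 J)
    (hIreg : I = {p | ∃ m ∈ minI, ∃ M ∈ maxI, m ≤ p ∧ p ≤ M})
    (hJreg : J = {p | ∃ m ∈ minJ, ∃ M ∈ maxJ, m ≤ p ∧ p ≤ M})
    (hminI : ↑minI = {p ∈ I | ∀ q ∈ I, q ≤ p → q = p})
    (hmaxI : ↑maxI = {p ∈ I | ∀ q ∈ I, p ≤ q → q = p})
    (hminJ : ↑minJ = {p ∈ J | ∀ q ∈ J, q ≤ p → q = p})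
    (hmaxJ : ↑maxJ = {p ∈ J | ∀ q ∈ J, p ≤ q → q = p})
    (ε : ℝ) (hε : 0 ≤ ε) :
    (J ⊆ thick2 I ε ∧ I ⊆ thick2 J ε) ↔
      max
        (max (minJ.sup' hmJ fun k => minI.inf' hmI fun i => dMinPt i k)
             (maxJ.sup' hMJ fun l => maxI.inf' hMI fun j => dMaxPt j l))
        (max (minI.sup' hmI fun i => minJ.inf' hmJ fun k => dMinPt k i)
             (maxI.sup' hMI fun j => maxJ.inf' hMJ fun l => dMaxPt l j)) ≤ ε := by
  have hminI' := hminI.subset.trans (sep_subset _ _)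
  have hmaxI' := hmaxI.subset.trans (sep_subset _ _)
  have hminJ' := hminJ.subset.trans (sep_subset _ _)
  have hmaxJ' := hmaxJ.subset.trans (sep_subset _ _)
  rw [subset_thick2_iff hε hIint hIreg hJreg hminI' hmaxI' hminJ' hmaxJ',
    subset_thick2_iff hε hJint hJreg hIreg hminJ' hmaxJ' hminI' hmaxI']
  simp only [max_le_iff, Finset.sup'_le_iff, Finset.inf'_le_iff, dMinPt_le_iff hε,
    dMaxPt_le_iff hε, Finset.mem_coe]
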